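/- For every nonnegative integer N and parameters a, e (generic): Σ_{m=0}^{N} (a)_m ((1-N)/2)_m (-N/2)_m / (m! (e)_m (1-N-e)_m) = 2^{-N} (e-a)_N/(e)_N · Σ_{s=0}^{N} (1-a-e-N)_s (-N)_s (-1)^s / (s! (1+a-e-N)_s). -/

import Mathlib

open Finset

noncomputable def poch (x : ℝ) (m : ℕ) : ℝ := (ascPochhammer ℝ m).eval x

/-! The duplication formula `4^m (-N/2)_m ((1-N)/2)_m = (-N)_{2m}` and the reflection
`(-x)_m = (-1)^m (x-m+1)_m` turn both sides into `(e)_N⁻¹` times polynomial sums in `a` and `e`: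
`quadSum N a e` on the left and `2^{-N} binomSum N a e` on the right. Both `F = 2^N quadSum` and
`F = binomSum` satisfy `F(N+1, e) = (a+e+N) F(N, e) + (e-a) F(N, e+1)` with `F(0, e) = 1`. For
`binomSum` this is Pascal's rule; for `quadSum` it is a Wilf–Zeilberger telescoping in `m` with
certificate `quadCert`, which reduces termwise to the three-term relation `poch_three_term`. -/

@[simp] lemma poch_zero (x : ℝ) : poch x 0 = 1 := by simp [poch]

lemma poch_succ (x : ℝ) (n : ℕ) : poch x (n + 1) = poch x n * (x + n) :=
  ascPochhammer_succ_eval n x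

lemma poch_succ_left (x : ℝ) (n : ℕ) : poch x (n + 1) = x * poch (x + 1) n := by
  simp [poch, ascPochhammer_succ_left, Polynomial.eval_comp]

lemma poch_add (x : ℝ) (n m : ℕ) : poch x (n + m) = poch x n * poch (x + n) m := by
  simp [poch, ← ascPochhammer_mul, Polynomial.eval_comp]

lemma poch_neg (x : ℝ) (m : ℕ) : poch (-x) m = (-1) ^ m * poch (x - m + 1) m := by
  rw [poch, ascPochhammer_eval_neg_eq_descPochhammer, descPochhammer_eval_eq_ascPochhammer, poch]

lemma poch_neg_natCast (N k : ℕ) : poch (-N) k = (-1) ^ k * N.descFactorial k := by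
  rw [poch, ascPochhammer_eval_neg_eq_descPochhammer, descPochhammer_eval_eq_descFactorial]

lemma poch_two_mul (x : ℝ) (m : ℕ) :
    poch x (2 * m) = 4 ^ m * (poch (x / 2) m * poch ((x + 1) / 2) m) := by
  induction m with
  | zero => simp
  | succ m ih =>
    rw [show 2 * (m + 1) = 2 * m + 1 + 1 by ring, poch_succ, poch_succ, ih, poch_succ, poch_succ]
    push_cast
    ring

lemma poch_half_mul_poch_half_natCast (N m : ℕ) :
    poch ((1 - N) / 2) m * poch (-(N : ℝ) / 2) m = N.descFactorial (2 * m) / 4 ^ m := by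
  have h := poch_two_mul (-N) m
  rw [poch_neg_natCast, pow_mul, neg_one_sq, one_pow, one_mul, neg_add_eq_sub] at h
  rw [h]
  field_simp

lemma poch_three_term (x b : ℝ) (n : ℕ) :
    2 * poch x (n + 1) - (x + b + n) * poch x n - (x - b) * poch (x + 1) n =
      b * n * poch (x + 1) (n - 1) := by
  cases n with
  | zero =>
    simp only [poch_succ, poch_zero, zero_add, Nat.cast_zero, add_zero, one_mul, mul_zero,
      zero_tsub]
    ring
  | succ n =>
    rw [poch_succ_left x (n + 1), poch_succ_left x, poch_succ (x + 1) n, Nat.add_sub_cancel]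
    push_cast
    ring

noncomputable def quadCoeff (a : ℝ) (m : ℕ) : ℝ := (-1) ^ m * poch a m / (4 ^ m * m.factorial)

noncomputable def quadTerm (N : ℕ) (a e : ℝ) (m : ℕ) : ℝ :=
  quadCoeff a m * (poch (e + m) (N - 2 * m) * N.descFactorial (2 * m))

noncomputable def quadSum (N : ℕ) (a e : ℝ) : ℝ := ∑ m ∈ range (N + 1), quadTerm N a e m

/-- The factor `m` makes the term at `m = 0` vanish despite the truncated `2 * m - 1`. -/
noncomputable def quadCert (N : ℕ) (a e : ℝ) (m : ℕ) : ℝ :=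
  quadCoeff a m * (-4 * m * poch (e + m) (N + 1 - 2 * m) * N.descFactorial (2 * m - 1))

noncomputable def binomSum (N : ℕ) (a e : ℝ) : ℝ :=
  ∑ s ∈ range (N + 1), (N.choose s : ℝ) * (poch (a + e + (N - s : ℕ)) s * poch (e - a) (N - s))

lemma quadCoeff_succ (a : ℝ) (m : ℕ) :
    -4 * ((m : ℝ) + 1) * quadCoeff a (m + 1) = (a + m) * quadCoeff a m := by
  rw [quadCoeff, quadCoeff, poch_succ, pow_succ, pow_succ, Nat.factorial_succ]
  push_cast
  field_simp

lemma quadTerm_eq_zero_of_lt {N m : ℕ} (h : N < 2 * m) (a e : ℝ) : quadTerm N a e m = 0 := by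
  simp [quadTerm, Nat.descFactorial_of_lt h]

lemma quadCert_zero (N : ℕ) (a e : ℝ) : quadCert N a e 0 = 0 := by
  simp [quadCert]

lemma quadCert_eq_zero_of_lt {N m : ℕ} (h : N < 2 * m - 1) (a e : ℝ) : quadCert N a e m = 0 := by
  simp [quadCert, Nat.descFactorial_of_lt h]

lemma quadCert_succ (N : ℕ) (a e : ℝ) (m : ℕ) :
    quadCert N a e (m + 1) =
      quadCoeff a m *
        ((a + m) * poch (e + m + 1) (N - 2 * m - 1) * N.descFactorial (2 * m + 1)) := by
  rw [quadCert, show N + 1 - 2 * (m + 1) = N - 2 * m - 1 by omega,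
    show 2 * (m + 1) - 1 = 2 * m + 1 by omega, Nat.cast_succ, ← add_assoc]
  linear_combination
    (poch (e + m + 1) (N - 2 * m - 1) * N.descFactorial (2 * m + 1)) * quadCoeff_succ a m

/-- For `m ≥ 1` every term carries the factor `N.descFactorial (2 * m - 1)`; removing it leaves
`N + 1 - 2 * m` times `poch_three_term (e + m) (a + m)`. -/
lemma quadTerm_succ_sub_aux (N : ℕ) (a e : ℝ) (m : ℕ) :
    2 * (poch (e + m) (N + 1 - 2 * m) * (N + 1).descFactorial (2 * m))
        - (a + e + N) * (poch (e + m) (N - 2 * m) * N.descFactorial (2 * m))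
        - (e - a) * (poch (e + 1 + m) (N - 2 * m) * N.descFactorial (2 * m)) =
      (a + m) * poch (e + m + 1) (N - 2 * m - 1) * N.descFactorial (2 * m + 1)
        + 4 * m * poch (e + m) (N + 1 - 2 * m) * N.descFactorial (2 * m - 1) := by
  rw [add_right_comm e 1]
  rcases m with _ | j
  · simp only [Nat.cast_zero, add_zero, mul_zero, Nat.sub_zero, Nat.descFactorial_zero,
      Nat.descFactorial_one, Nat.cast_one, zero_add]
    linear_combination poch_three_term e a N
  have h1 : (N + 1).descFactorial (2 * (j + 1)) = (N + 1) * N.descFactorial (2 * j + 1) :=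
    Nat.succ_descFactorial_succ N (2 * j + 1)
  have h2 : N.descFactorial (2 * (j + 1)) = (N - (2 * j + 1)) * N.descFactorial (2 * j + 1) :=
    Nat.descFactorial_succ N (2 * j + 1)
  have h3 : N.descFactorial (2 * (j + 1) + 1) = (N - (2 * j + 2)) * N.descFactorial (2 * (j + 1)) :=
    Nat.descFactorial_succ N (2 * j + 2)
  rw [h3, h1, h2, show 2 * (j + 1) - 1 = 2 * j + 1 by omega]
  rcases lt_or_ge N (2 * j + 1) with hN | hN
  · rw [Nat.descFactorial_of_lt hN]
    simp
  obtain ⟨n, rfl⟩ := Nat.exists_eq_add_of_le hN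
  rw [show 2 * j + 1 + n - 2 * (j + 1) - 1 = n - 1 - 1 by omega,
    show 2 * j + 1 + n + 1 - 2 * (j + 1) = n by omega,
    show 2 * j + 1 + n - (2 * j + 1) = n by omega,
    show 2 * j + 1 + n - 2 * (j + 1) = n - 1 by omega,
    show 2 * j + 1 + n - (2 * j + 2) = n - 1 by omega]
  rcases n with _ | k
  · grind
  have := poch_three_term (e + (j + 1 : ℕ)) (a + (j + 1 : ℕ)) k
  simp only [Nat.add_sub_cancel]
  push_cast at this ⊢
  linear_combination (k + 1) * ((2 * j + 1 + (k + 1)).descFactorial (2 * j + 1) : ℝ) * this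

lemma quadTerm_succ_sub (N : ℕ) (a e : ℝ) (m : ℕ) :
    2 * quadTerm (N + 1) a e m - (a + e + N) * quadTerm N a e m - (e - a) * quadTerm N a (e + 1) m =
      quadCert N a e (m + 1) - quadCert N a e m := by
  rw [quadCert_succ, quadTerm, quadTerm, quadTerm, quadCert]
  linear_combination quadCoeff a m * quadTerm_succ_sub_aux N a e m

lemma quadSum_succ (N : ℕ) (a e : ℝ) :
    2 * quadSum (N + 1) a e = (a + e + N) * quadSum N a e + (e - a) * quadSum N a (e + 1) := by
  have hext (e' : ℝ) : quadSum N a e' = ∑ m ∈ range (N + 2), quadTerm N a e' m := by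
    rw [sum_range_succ, quadTerm_eq_zero_of_lt (by omega), add_zero, quadSum]
  have htel : ∑ m ∈ range (N + 2), (2 * quadTerm (N + 1) a e m - (a + e + N) * quadTerm N a e m
      - (e - a) * quadTerm N a (e + 1) m) = 0 := by
    simp_rw [quadTerm_succ_sub]
    rw [sum_range_sub, quadCert_zero, quadCert_eq_zero_of_lt (by omega), sub_zero]
  rw [sum_sub_distrib, sum_sub_distrib, ← mul_sum, ← mul_sum, ← mul_sum, ← hext, ← hext] at htel
  rw [quadSum]
  linear_combination htel

lemma binomSum_succ (N : ℕ) (a e : ℝ) :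
    binomSum (N + 1) a e = (a + e + N) * binomSum N a e + (e - a) * binomSum N a (e + 1) := by
  rw [binomSum, sum_choose_succ_mul (fun i j => poch (a + e + j) i * poch (e - a) j) N, add_comm,
    binomSum, binomSum, mul_sum, mul_sum]
  congr 1 <;> refine sum_congr rfl fun i hi => ?_
  · rw [poch_succ, Nat.cast_sub (Nat.lt_succ_iff.mp (mem_range.mp hi))]
    ring_nf
  · rw [show N + 1 - i = N - i + 1 by grind, poch_succ_left, Nat.cast_succ]
    ring_nf

theorem two_pow_mul_quadSum (N : ℕ) (a e : ℝ) : 2 ^ N * quadSum N a e = binomSum N a e := by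
  induction N generalizing e with
  | zero => simp [quadSum, quadTerm, quadCoeff, binomSum]
  | succ N ih =>
    rw [binomSum_succ, ← ih, ← ih, pow_succ]
    linear_combination 2 ^ N * quadSum_succ N a e

lemma threeFTwo_term_eq (N : ℕ) (a e : ℝ) (m : ℕ) (he : poch e N ≠ 0) :
    poch a m * poch ((1 - N) / 2) m * poch (-(N : ℝ) / 2) m /
        (m.factorial * poch e m * poch (1 - N - e) m) = quadTerm N a e m / poch e N := by
  rw [mul_assoc (poch a m), poch_half_mul_poch_half_natCast]
  rcases lt_or_ge N (2 * m) with hN | hN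
  · simp [Nat.descFactorial_of_lt hN, quadTerm_eq_zero_of_lt hN]
  have hsplit : poch e N = poch e m * poch (e + m) (N - 2 * m) * poch (e + N - m) m := by
    conv_lhs => rw [show N = m + (N - 2 * m) + m by omega]
    rw [poch_add, poch_add, show m + (N - 2 * m) = N - m by omega, Nat.cast_sub (by omega),
      add_sub_assoc]
  have hrefl : poch (1 - N - e) m = (-1) ^ m * poch (e + N - m) m := by
    rw [show (1 - N - e : ℝ) = -(e + N - 1) by ring, poch_neg]
    ring_nf
  rw [hsplit] at he
  have h1 : poch e m ≠ 0 := by intro h; simp [h] at he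
  have h2 : poch (e + m) (N - 2 * m) ≠ 0 := by intro h; simp [h] at he
  have h3 : poch (e + N - m) m ≠ 0 := by intro h; simp [h] at he
  rw [hrefl, hsplit, quadTerm, quadCoeff]
  field_simp
  rw [← pow_mul, pow_mul', neg_one_sq, one_pow, mul_one]

lemma poch_mul_twoFOne_term (N : ℕ) (a e : ℝ) (s : ℕ) (hs : s ≤ N)
    (h : poch (1 + a - e - N) s ≠ 0) :
    poch (e - a) N * (poch (1 - a - e - N) s * poch (-(N : ℝ)) s * (-1) ^ s /
        (s.factorial * poch (1 + a - e - N) s)) =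
      N.choose s * (poch (a + e + (N - s : ℕ)) s * poch (e - a) (N - s)) := by
  have hnum : poch (1 - a - e - N) s = (-1) ^ s * poch (a + e + (N - s : ℕ)) s := by
    rw [show (1 - a - e - N : ℝ) = -(a + e + N - 1) by ring, poch_neg, Nat.cast_sub hs]
    ring_nf
  have hden : poch (1 + a - e - N) s = (-1) ^ s * poch (e - a + (N - s : ℕ)) s := by
    rw [show (1 + a - e - N : ℝ) = -(e - a + N - 1) by ring, poch_neg, Nat.cast_sub hs]
    ring_nf
  have hsplit : poch (e - a) N = poch (e - a) (N - s) * poch (e - a + (N - s : ℕ)) s := by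
    rw [← poch_add, Nat.sub_add_cancel hs]
  rw [hden] at h ⊢
  have h' : poch (e - a + (N - s : ℕ)) s ≠ 0 := right_ne_zero_of_mul h
  rw [hnum, hsplit, poch_neg_natCast, Nat.descFactorial_eq_factorial_mul_choose]
  push_cast
  field_simp
  rw [← pow_mul, pow_mul', neg_one_sq, one_pow, mul_one]

theorem stmt_11_general (N : ℕ) (a e : ℝ)
    (he : ∀ m : ℕ, m ≤ N → poch e m ≠ 0)
    (he'' : ∀ s : ℕ, s ≤ N → poch (1 + a - e - N) s ≠ 0) :
    ∑ m ∈ Finset.range (N + 1),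
        poch a m * poch ((1 - (N : ℝ)) / 2) m * poch (-(N : ℝ) / 2) m /
          ((Nat.factorial m) * poch e m * poch (1 - N - e) m) =
      (2 : ℝ) ^ (-(N : ℤ)) * poch (e - a) N / poch e N *
        ∑ s ∈ Finset.range (N + 1),
          poch (1 - a - e - N) s * poch (-(N : ℝ)) s * (-1) ^ s /
            ((Nat.factorial s) * poch (1 + a - e - N) s) := by
  have heN := he N le_rfl
  have hle {s : ℕ} (hs : s ∈ range (N + 1)) : s ≤ N := Nat.lt_succ_iff.mp (mem_range.mp hs)
  rw [sum_congr rfl fun m _ => threeFTwo_term_eq N a e m heN, ← sum_div, ← quadSum,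
    mul_div_right_comm, mul_assoc, mul_sum,
    sum_congr rfl fun s hs => poch_mul_twoFOne_term N a e s (hle hs) (he'' s (hle hs)), ← binomSum,
    ← two_pow_mul_quadSum, zpow_neg, zpow_natCast]
  field_simp

/-- Lemma A.3: the `₃F₂(1)` to `₂F₁(-1)` transformation. -/
theorem stmt_11 (N : ℕ) (a e : ℝ)
    (he : ∀ m : ℕ, m ≤ N → poch e m ≠ 0)
    (he' : ∀ m : ℕ, m ≤ N → poch (1 - N - e) m ≠ 0)
    (he'' : ∀ s : ℕ, s ≤ N → poch (1 + a - e - N) s ≠ 0) :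
    ∑ m ∈ Finset.range (N + 1),
        poch a m * poch ((1 - (N : ℝ)) / 2) m * poch (-(N : ℝ) / 2) m /
          ((Nat.factorial m) * poch e m * poch (1 - N - e) m) =
      (2 : ℝ) ^ (-(N : ℤ)) * poch (e - a) N / poch e N *
        ∑ s ∈ Finset.range (N + 1),
          poch (1 - a - e - N) s * poch (-(N : ℝ)) s * (-1) ^ s /
            ((Nat.factorial s) * poch (1 + a - e - N) s) :=
  stmt_11_general N a e he he''
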